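/- arXiv:1808.00576 — 5 statements merged into one kernel-verified Lean document; each statement's English description precedes it below -/
import Mathlib

section
/- If T is a (v,k,λ,μ)-partial difference set in a finite group G with λ ≠ μ, then T is reversible, i.e., T = T^{(-1)} := {t⁻¹ : t ∈ T}. -/
open Finset Pointwise

/-- `T` is a `(v,k,l,m)`-partial difference set in `G`: every nonidentity `g ∈ T` has exactly
`l`, and every nonidentity `g ∉ T` exactly `m`, representations `g = x * y⁻¹` with
`x, y ∈ T`, `x ≠ y`. -/
def IsPDS {G : Type*} [Group G] [Fintype G] [DecidableEq G]
    (T : Finset G) (v k : ℕ) (l m : ℤ) : Prop :=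
  Fintype.card G = v ∧ T.card = k ∧
    ∀ g : G, g ≠ 1 →
      ((((T ×ˢ T).filter fun p => p.1 ≠ p.2 ∧ p.1 * p.2⁻¹ = g)).card : ℤ) =
        if g ∈ T then l else m

theorem pds_reversible_of_lambda_ne_mu {G : Type*} [Group G] [Fintype G] [DecidableEq G]
    (T : Finset G) (v k : ℕ) (l m : ℤ) (hT : IsPDS T v k l m) (hlm : l ≠ m) :
    T⁻¹ = T := by
  obtain ⟨hv, hk, hcount⟩ := hT
  have key : ∀ g : G, (((T ×ˢ T).filter fun p => p.1 ≠ p.2 ∧ p.1 * p.2⁻¹ = g)).card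
      = (((T ×ˢ T).filter fun p => p.1 ≠ p.2 ∧ p.1 * p.2⁻¹ = g⁻¹)).card := by
    intro g
    refine Finset.card_bij' (fun p _ => (p.2, p.1)) (fun p _ => (p.2, p.1)) ?_ ?_ (fun p _ => rfl) (fun p _ => rfl)
    · intro p hp
      simp only [Finset.mem_filter, Finset.mem_product] at hp ⊢
      obtain ⟨⟨h1, h2⟩, h3, h4⟩ := hp
      exact ⟨⟨h2, h1⟩, Ne.symm h3, by rw [← h4]; group⟩
    · intro p hp
      simp only [Finset.mem_filter, Finset.mem_product] at hp ⊢
      obtain ⟨⟨h1, h2⟩, h3, h4⟩ := hp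
      refine ⟨⟨h2, h1⟩, Ne.symm h3, ?_⟩
      have : (p.1 * p.2⁻¹)⁻¹ = (g⁻¹)⁻¹ := by rw [h4]
      rw [inv_inv] at this
      rw [← this]; group
  have mem_iff : ∀ g : G, g ∈ T → g⁻¹ ∈ T := by
    intro g hg
    by_cases h1 : g = 1
    · simpa [h1] using hg
    · by_contra hginv
      have h1' : g⁻¹ ≠ 1 := by simpa using h1
      have e1 := hcount g h1
      have e2 := hcount g⁻¹ h1'
      rw [if_pos hg] at e1
      rw [if_neg hginv] at e2
      exact hlm (by rw [← e1, ← e2]; exact_mod_cast key g)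
  ext g
  simp only [Finset.mem_inv]
  constructor
  · rintro ⟨b, hb, rfl⟩
    exact mem_iff b hb
  · intro hg
    exact ⟨g⁻¹, mem_iff g hg, inv_inv g⟩
end

section
/- Let D be a (v,k,λ)-difference set in a finite group G and g ∈ G such that gD := {g·d : d ∈ D} is reversible and g⁻¹ ∉ D. Then gD is a regular (v,k,λ,λ)-partial difference set in G. -/
open Finset Pointwise

def IsDiffSet {G : Type*} [Group G] [Fintype G] [DecidableEq G]
    (D : Finset G) (v k : ℕ) (l : ℤ) : Prop :=
  Fintype.card G = v ∧ D.card = k ∧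
    ∀ g : G, g ≠ 1 →
      ((((D ×ˢ D).filter fun p => p.1 * p.2⁻¹ = g)).card : ℤ) = l

theorem translate_diffset_regular_pds {G : Type*} [Group G] [Fintype G] [DecidableEq G]
    (D : Finset G) (v k : ℕ) (l : ℤ) (hD : IsDiffSet D v k l) (g : G)
    (hrev : (D.image fun d => g * d)⁻¹ = D.image fun d => g * d)
    (hg : g⁻¹ ∉ D) :
    IsPDS (D.image fun d => g * d) v k l l ∧
      (1 : G) ∉ D.image fun d => g * d := by
  obtain ⟨hv, hk, hl⟩ := hD
  have h1 : (1 : G) ∉ D.image fun d => g * d := by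
    simp only [mem_image, not_exists]
    rintro d ⟨hd, he⟩
    exact hg ((eq_inv_of_mul_eq_one_right he) ▸ hd)
  refine ⟨⟨hv, by rw [card_image_of_injective D (mul_right_injective g)]; exact hk, ?_⟩, h1⟩
  intro h hh
  have hgh : g⁻¹ * h * g ≠ 1 := by
    intro hc
    apply hh
    have := congrArg (fun x => g * x * g⁻¹) hc
    simpa [mul_assoc] using this
  rw [ite_self, ← hl (g⁻¹ * h * g) hgh]
  congr 1
  refine (card_bij (fun p _ => (g * p.1, g * p.2)) ?_ ?_ ?_).symm
  · rintro ⟨d1, d2⟩ hp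
    rw [mem_filter, mem_product] at hp ⊢
    obtain ⟨⟨hd1, hd2⟩, heq⟩ := hp
    simp only at heq
    refine ⟨⟨mem_image_of_mem _ hd1, mem_image_of_mem _ hd2⟩, ?_, ?_⟩
    · intro hc
      have : d1 = d2 := mul_right_injective g hc
      subst this
      exact hgh (by rw [← heq]; group)
    · show (g * d1) * (g * d2)⁻¹ = h
      have : g * (d1 * d2⁻¹) * g⁻¹ = h := by rw [heq]; group
      rw [← this]; group
  · rintro ⟨d1, d2⟩ hp ⟨e1, e2⟩ hq hpq
    simp only [Prod.mk.injEq] at hpq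
    ext
    · exact mul_right_injective g hpq.1
    · exact mul_right_injective g hpq.2
  · rintro ⟨t1, t2⟩ ht
    rw [mem_filter, mem_product] at ht
    obtain ⟨⟨ht1, ht2⟩, hne, heq⟩ := ht
    simp only at hne heq
    rw [mem_image] at ht1 ht2
    obtain ⟨d1, hd1, he1⟩ := ht1
    obtain ⟨d2, hd2, he2⟩ := ht2
    refine ⟨(d1, d2), ?_, by simp [he1, he2]⟩
    rw [mem_filter, mem_product]
    refine ⟨⟨hd1, hd2⟩, ?_⟩
    subst he1 he2
    simp only
    rw [← heq]; group
end

section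
/- Let D be a (v,k,λ)-difference set in a finite group G and g ∈ G such that gD := {g·d : d ∈ D} is reversible and g⁻¹ ∈ D. Then gD \ {1_G} is a regular (v, k-1, λ-2, λ)-partial difference set in G. -/
open Finset Pointwise

theorem translate_diffset_erase_one_regular_pds {G : Type*} [Group G] [Fintype G] [DecidableEq G]
    (D : Finset G) (v k : ℕ) (l : ℤ) (hD : IsDiffSet D v k l) (g : G)
    (hrev : (D.image fun d => g * d)⁻¹ = D.image fun d => g * d)
    (hg : g⁻¹ ∈ D) :
    IsPDS ((D.image fun d => g * d).erase 1) v (k - 1) (l - 2) l ∧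
      ((D.image fun d => g * d).erase 1)⁻¹ = (D.image fun d => g * d).erase 1 ∧
      (1 : G) ∉ (D.image fun d => g * d).erase 1 := by
  obtain ⟨hv, hk, hl⟩ := hD
  set T' : Finset G := D.image fun d => g * d with hT'
  have hinj : Function.Injective (fun d : G => g * d) := fun a b h => by simpa using h
  have h1T' : (1 : G) ∈ T' := mem_image.2 ⟨g⁻¹, hg, mul_inv_cancel g⟩
  have hcard' : T'.card = k := by rw [hT', Finset.card_image_of_injective _ hinj, hk]
  have hinvmem : ∀ x : G, x ∈ T' → x⁻¹ ∈ T' := by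
    intro x hx
    rw [← hrev]; exact Finset.inv_mem_inv hx
  -- count over T'
  have hcount' : ∀ h : G, h ≠ 1 →
      (((T' ×ˢ T').filter fun p => p.1 * p.2⁻¹ = h).card : ℤ) = l := by
    intro h hh
    have hne : g⁻¹ * h * g ≠ 1 := by
      intro e
      apply hh
      have h2 : h = g * (g⁻¹ * h * g) * g⁻¹ := by group
      rw [e] at h2
      simpa using h2
    rw [← hl (g⁻¹ * h * g) hne]
    congr 1
    apply Finset.card_bij (fun p _ => (g⁻¹ * p.1, g⁻¹ * p.2))
    · rintro ⟨x, y⟩ hp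
      simp only [Finset.mem_filter, Finset.mem_product, hT', Finset.mem_image] at hp ⊢
      obtain ⟨⟨⟨a, ha, hax⟩, ⟨b, hb, hby⟩⟩, hxy⟩ := hp
      refine ⟨⟨?_, ?_⟩, ?_⟩
      · simpa [← hax] using ha
      · simpa [← hby] using hb
      · simp only [mul_inv_rev]
        rw [← hxy]
        group
    · rintro ⟨x, y⟩ hp ⟨x', y'⟩ hp' hEq
      simp only [Prod.mk.injEq] at hEq ⊢
      exact ⟨mul_left_cancel hEq.1, mul_left_cancel hEq.2⟩
    · rintro ⟨a, b⟩ hp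
      refine ⟨(g * a, g * b), ?_, by simp⟩
      simp only [Finset.mem_filter, Finset.mem_product, hT', Finset.mem_image] at hp ⊢
      obtain ⟨⟨ha, hb⟩, hab⟩ := hp
      refine ⟨⟨⟨a, ha, rfl⟩, ⟨b, hb, rfl⟩⟩, ?_⟩
      have : a * b⁻¹ = g⁻¹ * h * g := hab
      simp only [mul_inv_rev]
      calc g * a * (b⁻¹ * g⁻¹) = g * (a * b⁻¹) * g⁻¹ := by group
        _ = h := by rw [this]; group
  have key : ∀ h : G, h ≠ 1 →
      (((((T'.erase 1) ×ˢ (T'.erase 1)).filter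
          fun p => p.1 ≠ p.2 ∧ p.1 * p.2⁻¹ = h).card : ℤ)) =
        if h ∈ T' then l - 2 else l := by
    intro h hh
    set S' := (T' ×ˢ T').filter fun p : G × G => p.1 * p.2⁻¹ = h with hS'
    have hSeq : (((T'.erase 1) ×ˢ (T'.erase 1)).filter
          fun p => p.1 ≠ p.2 ∧ p.1 * p.2⁻¹ = h) =
        S'.filter fun p => p.1 ≠ 1 ∧ p.2 ≠ 1 := by
      ext ⟨x, y⟩
      simp only [hS', Finset.mem_filter, Finset.mem_product, Finset.mem_erase]
      constructor
      · rintro ⟨⟨⟨hx1, hx⟩, ⟨hy1, hy⟩⟩, _, hxy⟩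
        exact ⟨⟨⟨hx, hy⟩, hxy⟩, hx1, hy1⟩
      · rintro ⟨⟨⟨hx, hy⟩, hxy⟩, hx1, hy1⟩
        refine ⟨⟨⟨hx1, hx⟩, ⟨hy1, hy⟩⟩, ?_, hxy⟩
        intro e; apply hh; rw [← hxy, e]; simp
    rw [hSeq]
    have hsplit := Finset.card_filter_add_card_filter_not
      (s := S') (p := fun p : G × G => p.1 ≠ 1 ∧ p.2 ≠ 1)
    by_cases hhT : h ∈ T'
    · have hbad : S'.filter (fun p : G × G => ¬(p.1 ≠ 1 ∧ p.2 ≠ 1)) =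
          {((1 : G), h⁻¹), (h, (1 : G))} := by
        ext ⟨x, y⟩
        simp only [hS', Finset.mem_filter, Finset.mem_product, Finset.mem_insert,
          Finset.mem_singleton, Prod.mk.injEq, not_and_or, not_not]
        constructor
        · rintro ⟨⟨⟨hx, hy⟩, hxy⟩, hc⟩
          rcases hc with hc | hc
          · left
            refine ⟨hc, ?_⟩
            rw [hc] at hxy
            have : y⁻¹ = h := by simpa using hxy
            exact inv_eq_iff_eq_inv.mp this
          · right
            refine ⟨?_, hc⟩
            rw [hc] at hxy; simpa using hxy
        · rintro (⟨hx, hy⟩ | ⟨hx, hy⟩)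
          · subst hx; subst hy
            exact ⟨⟨⟨h1T', hinvmem h hhT⟩, by simp⟩, Or.inl rfl⟩
          · subst hx; subst hy
            exact ⟨⟨⟨hhT, h1T'⟩, by simp⟩, Or.inr rfl⟩
      have hbadcard : (S'.filter (fun p : G × G => ¬(p.1 ≠ 1 ∧ p.2 ≠ 1))).card = 2 := by
        rw [hbad]
        rw [Finset.card_insert_of_notMem, Finset.card_singleton]
        simp only [Finset.mem_singleton, Prod.mk.injEq, not_and]
        intro e; exact absurd e.symm hh
      have hScard : (S'.card : ℤ) = l := hcount' h hh
      have : ((S'.filter fun p : G × G => p.1 ≠ 1 ∧ p.2 ≠ 1).card : ℤ) = l - 2 := by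
        have := hsplit
        rw [hbadcard] at this
        omega
      rw [this, if_pos hhT]
    · have hbad : S'.filter (fun p : G × G => ¬(p.1 ≠ 1 ∧ p.2 ≠ 1)) = ∅ := by
        rw [Finset.eq_empty_iff_forall_notMem]
        rintro ⟨x, y⟩ hm
        simp only [hS', Finset.mem_filter, Finset.mem_product] at hm
        obtain ⟨⟨⟨hx, hy⟩, hxy⟩, hc⟩ := hm
        rw [not_and_or, not_not, not_not] at hc
        rcases hc with hc | hc
        · rw [hc] at hxy
          apply hhT
          have hy1 : y⁻¹ = h := by simpa using hxy
          have hy' : y = h⁻¹ := inv_eq_iff_eq_inv.mp hy1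
          have := hinvmem y hy
          rwa [hy', inv_inv] at this
        · rw [hc] at hxy
          apply hhT
          rw [← hxy]
          simpa using hx
      have hScard : (S'.card : ℤ) = l := hcount' h hh
      have hss : (S'.filter fun p : G × G => p.1 ≠ 1 ∧ p.2 ≠ 1).card = S'.card := by
        rw [hbad] at hsplit
        simpa using hsplit
      rw [hss, hScard, if_neg hhT]
  refine ⟨⟨hv, ?_, ?_⟩, ?_, Finset.notMem_erase _ _⟩
  · rw [Finset.card_erase_of_mem h1T', hcard']
  · intro h hh
    rw [key h hh]
    have : h ∈ T'.erase 1 ↔ h ∈ T' := by simp [Finset.mem_erase, hh]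
    simp [this]
  · ext x
    simp only [Finset.mem_inv', Finset.mem_erase, ne_eq, inv_eq_one]
    constructor
    · rintro ⟨hx1, hx⟩
      exact ⟨hx1, by simpa using hinvmem _ hx⟩
    · rintro ⟨hx1, hx⟩
      exact ⟨hx1, hinvmem _ hx⟩
end

section
/- There is no (96,20,4)-difference set in the cyclic group ℤ/96ℤ. -/
/-!
Project a putative difference set `D ⊆ ℤ/96` to `ℤ/32` and `ℤ/16`. The fiber counts `f` over `ℤ/32`
have autocorrelations `28` and `12`, both even, so over `𝔽₂` the polynomial `F = ∑ f(c) X^c`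
satisfies `F(X) F(X⁻¹) ≡ 0 mod X³² - 1 = (X - 1)³²`. As `F(X)` and `F(X⁻¹)` vanish to the same order
at `X = 1`, that order is at least 16, so `X¹⁶ - 1 ∣ F` and `f` is 16-periodic modulo 2. Hence every
fiber count over `ℤ/16` is even. Halving them gives `e` on `ℤ/16` with `∑ e = ∑ e² = 10` (so `e` is
0/1-valued) and autocorrelation `6` at every nonzero shift. The same argument makes `e` 8-periodic,
which forces its autocorrelation at `8` to be `10` rather than `6`.
-/

open Finset Polynomial

def autocorr {G R : Type*} [AddCommGroup G] [Fintype G] [Semiring R] (a : G → R) (h : G) : R :=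
  ∑ c, a c * a (c + h)

theorem autocorr_const_mul {G R : Type*} [AddCommGroup G] [Fintype G] [CommSemiring R]
    (k : R) (a : G → R) (h : G) : autocorr (fun c => k * a c) h = k * k * autocorr a h := by
  simp only [autocorr, mul_sum]
  exact sum_congr rfl fun _ _ => by ring

theorem sum_smul_mul_sum_smul_neg {G K A : Type*} [AddCommGroup G] [Fintype G] [CommSemiring K]
    [CommSemiring A] [Algebra K A] (ψ : AddChar G A) (a : G → K) :
    (∑ c, a c • ψ c) * (∑ c, a c • ψ (-c)) = ∑ h, autocorr a h • ψ h := by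
  simp_rw [sum_mul_sum, smul_mul_smul_comm, ← AddChar.map_add_eq_mul, autocorr, sum_smul]
  rw [sum_comm]
  conv_rhs => rw [sum_comm]
  refine sum_congr rfl fun d _ => ?_
  exact (Fintype.sum_equiv (Equiv.addLeft d) _ _ fun h => by simp [mul_comm]).symm

section Fibers

variable {G H : Type*} [DecidableEq H]

def fiberCard (D : Finset G) (ψ : G → H) (c : H) : ℕ := #{x ∈ D | ψ x = c}

variable [Fintype H]

theorem sum_fiberCard (D : Finset G) (ψ : G → H) : ∑ c, fiberCard D ψ c = #D :=
  (card_eq_sum_card_fiberwise fun _ _ => mem_univ _).symm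

theorem fiberCard_comp {I : Type*} [DecidableEq I] (D : Finset G) (ψ : G → H) (π : H → I)
    (c : I) : fiberCard D (π ∘ ψ) c = ∑ b with π b = c, fiberCard D ψ b := by
  rw [fiberCard, card_eq_sum_card_fiberwise (f := ψ) (t := {b | π b = c}) fun x hx => by simp_all]
  refine sum_congr rfl fun b hb => ?_
  rw [fiberCard, filter_filter]
  refine congrArg card (filter_congr fun x _ => ?_)
  simp only [Function.comp_apply, mem_filter, mem_univ, true_and] at hb ⊢
  exact ⟨And.right, fun hx => ⟨hx ▸ hb, hx⟩⟩

end Fibers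

section DifferenceSet

variable {G : Type*} [AddCommGroup G] [DecidableEq G]

def diffCount (D : Finset G) (g : G) : ℕ := #{p ∈ D ×ˢ D | p.1 - p.2 = g}

theorem diffCount_zero (D : Finset G) : diffCount D 0 = #D := by
  rw [diffCount, ← diag_card D]
  congr 1
  ext ⟨x, y⟩
  simp only [mem_filter, mem_product, mem_diag, sub_eq_zero]
  constructor
  · rintro ⟨⟨hx, -⟩, rfl⟩; exact ⟨hx, rfl⟩
  · rintro ⟨hx, rfl⟩; exact ⟨⟨hx, hx⟩, rfl⟩

variable [Fintype G] {H : Type*} [AddCommGroup H] [Fintype H] [DecidableEq H]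
  {F : Type*} [FunLike F G H] [AddMonoidHomClass F G H]

theorem autocorr_fiberCard (D : Finset G) (ψ : F) (h : H) :
    autocorr (fiberCard D ψ) h = ∑ g with ψ g = h, diffCount D g := by
  have hpairs : autocorr (fiberCard D ψ) h = #{p ∈ D ×ˢ D | ψ (p.1 - p.2) = h} := by
    rw [card_eq_sum_card_fiberwise (f := fun p => ψ p.2) (t := univ) (by simp)]
    refine sum_congr rfl fun c _ => ?_
    rw [fiberCard, fiberCard, mul_comm, ← card_product, ← filter_product, filter_filter]
    refine congrArg card (filter_congr fun p _ => ?_)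
    rw [map_sub]
    constructor
    · rintro ⟨h1, h2⟩; exact ⟨by rw [h1, h2]; abel, h2⟩
    · rintro ⟨h1, h2⟩; exact ⟨by rw [← h1, h2]; abel, h2⟩
  rw [hpairs, card_eq_sum_card_fiberwise (f := fun p => p.1 - p.2) (t := {g | ψ g = h})
    fun p hp => by simp_all]
  refine sum_congr rfl fun g hg => ?_
  rw [diffCount, filter_filter]
  refine congrArg card (filter_congr fun p _ => ?_)
  simp only [mem_filter, mem_univ, true_and] at hg
  exact ⟨And.right, fun hp => ⟨hp ▸ hg, hp⟩⟩

theorem autocorr_fiberCard_of_diffCount {D : Finset G} {lam m : ℕ}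
    (hD : ∀ g ≠ 0, diffCount D g = lam) (ψ : F) (hψ : ∀ c, #{g | ψ g = c} = m) (h : H) :
    autocorr (fiberCard D ψ) h = if h = 0 then #D + lam * (m - 1) else lam * m := by
  rw [autocorr_fiberCard]
  split_ifs with h0
  · subst h0
    have h0mem : (0 : G) ∈ ({g | ψ g = 0} : Finset G) := by simp
    rw [← add_sum_erase _ _ h0mem, diffCount_zero, sum_const_nat (m := lam),
      card_erase_of_mem h0mem, hψ, mul_comm]
    exact fun g hg => hD g (ne_of_mem_erase hg)
  · rw [sum_const_nat (m := lam), hψ, mul_comm]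
    refine fun g hg => hD g fun hg0 => h0 ?_
    simpa [hg0, eq_comm] using hg

end DifferenceSet

theorem card_fiber_castHom {n m : ℕ} [NeZero n] (hmn : m ∣ n) (c : ZMod m) :
    #{g : ZMod n | ZMod.castHom hmn (ZMod m) g = c} = n / m := by
  have : NeZero m := ⟨fun h => NeZero.ne n (Nat.eq_zero_of_zero_dvd (h ▸ hmn))⟩
  have hsum := card_eq_sum_card_fiberwise (s := univ) (t := univ)
    (f := ZMod.castHom hmn (ZMod m)) fun _ _ => mem_univ _
  simp only [fun b => AddMonoidHom.card_fiber_eq_of_mem_range (ZMod.castHom hmn (ZMod m))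
    (ZMod.castHom_surjective hmn b) (ZMod.castHom_surjective hmn c), sum_const, card_univ,
    ZMod.card, smul_eq_mul] at hsum
  exact (Nat.div_eq_of_eq_mul_right (Nat.pos_of_neZero m) hsum).symm

theorem autocorr_fiberCard_castHom {n m lam : ℕ} [NeZero n] [NeZero m] {D : Finset (ZMod n)}
    (hD : ∀ g ≠ 0, diffCount D g = lam) (hmn : m ∣ n) (h : ZMod m) :
    autocorr (fiberCard D (ZMod.castHom hmn (ZMod m))) h =
      if h = 0 then #D + lam * (n / m - 1) else lam * (n / m) :=
  autocorr_fiberCard_of_diffCount hD _ (card_fiber_castHom hmn) h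

theorem AdjoinRoot.root_X_pow_sub_one_pow {R : Type*} [CommRing R] (N : ℕ) :
    root (X ^ N - 1 : R[X]) ^ N = 1 := by
  have h := aeval_eq (f := (X ^ N - 1 : R[X])) (X ^ N - 1)
  rwa [mk_self, map_sub, map_pow, aeval_X, map_one, sub_eq_zero] at h

section ZModPoly

variable {K : Type*} [Field K] {N : ℕ} [NeZero N]

noncomputable def zmodPoly (a : ZMod N → K) : K[X] := ∑ c, C (a c) * X ^ c.val

theorem coeff_zmodPoly_val (a : ZMod N → K) (c : ZMod N) : (zmodPoly a).coeff c.val = a c := by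
  simp [zmodPoly, (ZMod.val_injective N).eq_iff]

theorem degree_zmodPoly_lt (a : ZMod N → K) : (zmodPoly a).degree < N := by
  refine (degree_sum_le _ _).trans_lt ((Finset.sup_lt_iff (WithBot.bot_lt_coe _)).2 fun c _ => ?_)
  exact (degree_C_mul_X_pow_le _ _).trans_lt (WithBot.coe_lt_coe.2 (ZMod.val_lt c))

theorem eq_zero_of_dvd_zmodPoly {a : ZMod N → K} (h : X ^ N - 1 ∣ zmodPoly a) : a = 0 := by
  have hdeg : (X ^ N - 1 : K[X]).degree = N := by
    rw [← C_1]; exact degree_X_pow_sub_C (Nat.pos_of_neZero N) 1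
  have h0 := eq_zero_of_dvd_of_degree_lt h (hdeg ▸ degree_zmodPoly_lt a)
  funext c
  rw [← coeff_zmodPoly_val a c, h0, coeff_zero, Pi.zero_apply]

theorem aeval_zmodPoly {A : Type*} [CommRing A] [Algebra K A] {ζ : A} (hζ : ζ ^ N = 1)
    (a : ZMod N → K) : aeval ζ (zmodPoly a) = ∑ c, a c • AddChar.zmodChar N hζ c := by
  simp [zmodPoly, AddChar.zmodChar_apply, Algebra.smul_def]

-- On `N`-th roots of unity, `X ↦ X ^ (N - 1)` is inversion.
theorem aeval_expand_zmodPoly {A : Type*} [CommRing A] [Algebra K A] {ζ : A} (hζ : ζ ^ N = 1)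
    (a : ZMod N → K) :
    aeval ζ (expand K (N - 1) (zmodPoly a)) = ∑ c, a c • AddChar.zmodChar N hζ (-c) := by
  rw [expand_aeval, zmodPoly]
  simp only [map_sum, map_mul, aeval_C, map_pow, aeval_X, Algebra.smul_def]
  refine sum_congr rfl fun c _ => ?_
  have : -c = (N - 1) • c := by
    rw [nsmul_eq_mul, Nat.cast_pred (Nat.pos_of_neZero N), ZMod.natCast_self]; ring
  rw [this, AddChar.map_nsmul_eq_pow, AddChar.zmodChar_apply, ← pow_mul, ← pow_mul, mul_comm c.val,
    mul_comm]

theorem dvd_zmodPoly_mul_expand {a : ZMod N → K} (ha : ∀ h, autocorr a h = 0) :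
    X ^ N - 1 ∣ zmodPoly a * expand K (N - 1) (zmodPoly a) := by
  have hζ := AdjoinRoot.root_X_pow_sub_one_pow (R := K) N
  rw [← AdjoinRoot.mk_eq_zero, ← AdjoinRoot.aeval_eq, map_mul, aeval_zmodPoly hζ,
    aeval_expand_zmodPoly hζ, sum_smul_mul_sum_smul_neg]
  simp [ha]

theorem apply_add_eq_of_dvd {a : ZMod N → K} {m : ℕ}
    (h : X ^ N - 1 ∣ (X ^ m - 1) * zmodPoly a) (c : ZMod N) : a (c + m) = a c := by
  have hζ := AdjoinRoot.root_X_pow_sub_one_pow (R := K) N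
  set χ := AddChar.zmodChar N hζ
  have hmul : (χ m - 1) * ∑ c, a c • χ c = 0 := by
    rw [← AdjoinRoot.mk_eq_zero, ← AdjoinRoot.aeval_eq] at h
    rwa [map_mul, aeval_zmodPoly hζ, map_sub, map_pow, aeval_X, map_one,
      ← AddChar.zmodChar_apply' hζ] at h
  have hshift : X ^ N - 1 ∣ zmodPoly (fun c => a (c - (m : ZMod N)) - a c) := by
    rw [← AdjoinRoot.mk_eq_zero, ← AdjoinRoot.aeval_eq, aeval_zmodPoly hζ, ← hmul, sub_mul,
      one_mul, mul_sum]
    simp_rw [sub_smul, sum_sub_distrib, mul_smul_comm, ← AddChar.map_add_eq_mul]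
    congr 1
    exact Fintype.sum_equiv (Equiv.subRight (m : ZMod N)) _ _ fun c => by simp [χ]
  simpa [sub_eq_zero, eq_comm] using congrFun (eq_zero_of_dvd_zmodPoly hshift) (c + m)

end ZModPoly

theorem rootMultiplicity_one_expand {K : Type*} [Field K] {k : ℕ} (hk : (k : K) ≠ 0) (p : K[X]) :
    (expand K k p).rootMultiplicity 1 = p.rootMultiplicity 1 := by
  obtain rfl | hp := eq_or_ne p 0
  · simp
  obtain ⟨q, hpq, hq⟩ := p.exists_eq_pow_rootMultiplicity_mul_and_not_dvd hp 1
  set v := p.rootMultiplicity 1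
  have hgeom : expand K k (X - C 1) = (X - C 1) * ∑ i ∈ range k, X ^ i := by
    rw [C_1, mul_geom_sum]; simp
  have hr : ¬ ((∑ i ∈ range k, (X : K[X]) ^ i) ^ v * expand K k q).IsRoot 1 := by
    rw [dvd_iff_isRoot] at hq
    simpa [expand_eval, hk] using hq
  conv_lhs => rw [hpq, map_mul, map_pow, hgeom, mul_pow, mul_assoc, mul_comm]
  rw [rootMultiplicity_mul_X_sub_C_pow (fun h => hr (by simp [h])), rootMultiplicity_eq_zero hr,
    zero_add]

theorem apply_add_two_pow_eq_of_autocorr_eq_zero {K : Type*} [Field K] [CharP K 2] {n : ℕ}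
    {a : ZMod (2 ^ (n + 1)) → K} (ha : ∀ h, autocorr a h = 0) (c : ZMod (2 ^ (n + 1))) :
    a (c + (2 ^ n : ℕ)) = a c := by
  have hfrob : ∀ k, (X - C 1 : K[X]) ^ 2 ^ k = X ^ 2 ^ k - 1 := fun k => by
    simp [sub_pow_char_pow]
  have hdvd : X ^ 2 ^ n - 1 ∣ zmodPoly a := by
    obtain hP | hP := eq_or_ne (zmodPoly a) 0
    · simp [hP]
    have h2n : 2 ^ (n + 1) = 2 * 2 ^ n := pow_succ' 2 n
    have := n.one_le_two_pow
    have hodd : ((2 ^ (n + 1) - 1 : ℕ) : K) ≠ 0 := by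
      rw [ne_eq, CharP.cast_eq_zero_iff K 2]
      omega
    have hPQ : zmodPoly a * expand K (2 ^ (n + 1) - 1) (zmodPoly a) ≠ 0 :=
      mul_ne_zero hP ((expand_ne_zero (by omega)).2 hP)
    have hN := (le_rootMultiplicity_iff hPQ).2 (hfrob (n + 1) ▸ dvd_zmodPoly_mul_expand ha)
    rw [rootMultiplicity_mul hPQ, rootMultiplicity_one_expand hodd] at hN
    rw [← hfrob, ← le_rootMultiplicity_iff hP]
    omega
  refine apply_add_eq_of_dvd ?_ c
  rw [← hfrob, show (X - C 1 : K[X]) ^ 2 ^ (n + 1) = ((X - C 1) ^ 2 ^ n) ^ 2 by ring, sq, hfrob]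
  exact mul_dvd_mul_left _ hdvd

theorem natCast_apply_add_two_pow_eq_of_even_autocorr {n : ℕ} {a : ZMod (2 ^ (n + 1)) → ℕ}
    (ha : ∀ h, Even (autocorr a h)) (c : ZMod (2 ^ (n + 1))) :
    (a (c + (2 ^ n : ℕ)) : ZMod 2) = a c :=
  apply_add_two_pow_eq_of_autocorr_eq_zero (a := fun c => (a c : ZMod 2))
    (fun h => by simpa [autocorr] using ZMod.natCast_eq_zero_iff_even.2 (ha h)) c

theorem sum_fiber_castHom_eq_zero_of_periodic {R : Type*} [CommRing R] [CharP R 2] {m : ℕ}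
    [NeZero m] {a : ZMod (2 * m) → R} (ha : ∀ b, a (b + m) = a b) (c : ZMod m) :
    ∑ b with ZMod.castHom (dvd_mul_left m 2) (ZMod m) b = c, a b = 0 := by
  have hm0 := Nat.pos_of_neZero m
  have hm : (m : ZMod (2 * m)) ≠ 0 := by
    rw [ne_eq, ZMod.natCast_eq_zero_iff]
    exact Nat.not_dvd_of_pos_of_lt hm0 (by omega)
  refine sum_involution (fun b _ => b + m) (fun b _ => by rw [ha, CharTwo.add_self_eq_zero])
    (fun b _ _ => by simpa using hm) (fun b hb => ?_) (fun b _ => ?_)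
  · simp only [mem_filter, mem_univ, true_and, map_add, map_natCast, ZMod.natCast_self,
      add_zero] at hb ⊢
    exact hb
  · rw [add_assoc, ← Nat.cast_add, ← two_mul, ZMod.natCast_self, add_zero]

theorem even_fiberCard_comp_castHom {G : Type*} {m : ℕ} [NeZero m] {D : Finset G}
    {ψ : G → ZMod (2 * m)} (hψ : ∀ b, (fiberCard D ψ (b + m) : ZMod 2) = fiberCard D ψ b)
    (c : ZMod m) : Even (fiberCard D (ZMod.castHom (dvd_mul_left m 2) (ZMod m) ∘ ψ) c) := by
  rw [← ZMod.natCast_eq_zero_iff_even, fiberCard_comp, Nat.cast_sum]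
  exact sum_fiber_castHom_eq_zero_of_periodic hψ c

theorem le_one_of_sum_mul_self_eq_sum {ι : Type*} [Fintype ι] {e : ι → ℕ}
    (h : ∑ i, e i * e i = ∑ i, e i) (i : ι) : e i ≤ 1 := by
  have := (sum_eq_sum_iff_of_le fun i _ => Nat.le_mul_self (e i)).1 h.symm i (mem_univ i)
  nlinarith

theorem autocorr_two_pow_eq_autocorr_zero {n : ℕ} {e : ZMod (2 ^ (n + 1)) → ℕ}
    (heven : ∀ h, Even (autocorr e h)) (hsq : autocorr e 0 = ∑ c, e c) :
    autocorr e (2 ^ n : ℕ) = autocorr e 0 := by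
  have hle : ∀ c, e c < 2 := fun c =>
    Nat.lt_succ_of_le (le_one_of_sum_mul_self_eq_sum (by simpa [autocorr] using hsq) c)
  have hper : ∀ c, e (c + (2 ^ n : ℕ)) = e c := fun c => by
    rw [← ZMod.val_cast_of_lt (hle _), natCast_apply_add_two_pow_eq_of_even_autocorr heven,
      ZMod.val_cast_of_lt (hle c)]
  simp only [autocorr, hper, add_zero]

theorem no_diffset_in_cyclic_96 :
    ¬ ∃ D : Finset (ZMod 96), D.card = 20 ∧
      ∀ g : ZMod 96, g ≠ 0 →
        ((D ×ˢ D).filter fun p => p.1 - p.2 = g).card = 4 := by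
  rintro ⟨D, hD, hdiff⟩
  have h32 : 32 ∣ 96 := by norm_num
  have h16 : 16 ∣ 96 := by norm_num
  have hf := natCast_apply_add_two_pow_eq_of_even_autocorr (n := 4)
    (a := fiberCard D (ZMod.castHom h32 (ZMod 32))) fun h => by
      rw [autocorr_fiberCard_castHom hdiff, hD]; split_ifs <;> decide
  have hg : ∀ c, Even (fiberCard D (ZMod.castHom h16 (ZMod 16)) c) := by
    rw [← ZMod.castHom_comp (show 16 ∣ 32 by norm_num) h32, RingHom.coe_comp]
    exact even_fiberCard_comp_castHom (m := 16) hf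
  choose e he using hg
  have hge : fiberCard D (ZMod.castHom h16 (ZMod 16)) = fun c => 2 * e c :=
    funext fun c => (he c).trans (two_mul _).symm
  have he_corr : ∀ h, autocorr e h = if h = 0 then 10 else 6 := fun h => by
    have := autocorr_fiberCard_castHom hdiff h16 h
    rw [hge, autocorr_const_mul, hD] at this
    split_ifs at this ⊢ <;> omega
  have he_sum : ∑ c, e c = 10 := by
    have := sum_fiberCard D (ZMod.castHom h16 (ZMod 16))
    rw [hge, ← mul_sum, hD] at this
    omega
  have := autocorr_two_pow_eq_autocorr_zero (n := 3) (e := e)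
    (fun h => by rw [he_corr]; split_ifs <;> decide) (by rw [he_corr]; exact he_sum.symm)
  rw [he_corr, he_corr, if_neg (by decide), if_pos rfl] at this
  omega
end

section
/- Let H ≅ (ℤ/2ℤ)⁴ and let H₁,…,H₅ be the five subsets of H of size 4 arising from a spread of H (five subgroups of order 4 pairwise intersecting trivially). Let G = H ⊕ ℤ/6ℤ and let g₁,…,g₅ be coset representatives of five distinct cosets of H in G. Then D = ∪ᵢ gᵢHᵢ is a (96,20,4)-difference set in G. -/
open Finset

section aux

abbrev H4 := Fin 4 → ZMod 2

lemma char2_add_add (a b : H4) : a + (a + b) = b := by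
  funext i
  simp only [Pi.add_apply]
  have key : ∀ x y : ZMod 2, x + (x + y) = y := by decide
  exact key _ _

lemma char2_add_self (a : H4) : a + a = 0 := by
  have := char2_add_add a 0
  rwa [add_zero] at this

lemma char2_eq_iff (a b : H4) : a + b = 0 ↔ a = b := by
  rw [funext_iff, funext_iff]
  refine forall_congr' fun i => ?_
  simp only [Pi.add_apply, Pi.zero_apply]
  have key : ∀ x y : ZMod 2, x + y = 0 ↔ x = y := by decide
  exact key _ _

lemma char2_swap (h k h' k' : H4) : h + k = h' + k' ↔ h + h' = k' + k := by
  rw [funext_iff, funext_iff]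
  refine forall_congr' fun i => ?_
  simp only [Pi.add_apply]
  have key : ∀ a b c d : ZMod 2, a + b = c + d ↔ a + c = d + b := by decide
  exact key _ _ _ _

lemma char2_sub_iff (p q h k c : H4) : (p + h) - (q + k) = c ↔ h + k = c + p + q := by
  rw [funext_iff, funext_iff]
  refine forall_congr' fun i => ?_
  simp only [Pi.add_apply, Pi.sub_apply]
  have key : ∀ a b c d e : ZMod 2, (a + b) - (c + d) = e ↔ b + d = e + a + c := by decide
  exact key _ _ _ _ _

/-- Counting solutions of `h + k = c` with both in the same subgroup. -/
lemma pair_count_diag (A : Finset H4) (hc : ∀ a ∈ A, ∀ b ∈ A, a + b ∈ A) (c : H4) :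
    ((A ×ˢ A).filter fun p => p.1 + p.2 = c).card = if c ∈ A then A.card else 0 := by
  split_ifs with hcA
  · refine card_bij' (fun p _ => p.1) (fun h _ => (h, h + c)) ?_ ?_ ?_ ?_
    · intro p hp
      exact (mem_product.mp (mem_filter.mp hp).1).1
    · intro h hh
      refine mem_filter.mpr ⟨mem_product.mpr ⟨hh, hc _ hh _ hcA⟩, char2_add_add h c⟩
    · intro p hp
      have h2 := (mem_filter.mp hp).2
      have : p.1 + c = p.2 := by rw [← h2]; exact char2_add_add p.1 p.2
      exact Prod.ext rfl this
    · intro h _; rfl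
  · rw [card_eq_zero, filter_eq_empty_iff]
    intro p hp hpc
    obtain ⟨h1, h2⟩ := mem_product.mp hp
    exact hcA (hpc ▸ hc _ h1 _ h2)

/-- Counting solutions of `h + k = c` with `h ∈ A`, `k ∈ B` for two subgroups of order 4
meeting trivially: exactly one solution. -/
lemma pair_count_off (A B : Finset H4)
    (hAc : ∀ a ∈ A, ∀ b ∈ A, a + b ∈ A) (hBc : ∀ a ∈ B, ∀ b ∈ B, a + b ∈ B)
    (hA : A.card = 4) (hB : B.card = 4) (hAB : A ∩ B = {0}) (c : H4) :
    ((A ×ˢ B).filter fun p => p.1 + p.2 = c).card = 1 := by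
  have hinj : ∀ p ∈ A ×ˢ B, ∀ q ∈ A ×ˢ B, p.1 + p.2 = q.1 + q.2 → p = q := by
    intro p hp q hq he
    obtain ⟨hp1, hp2⟩ := mem_product.mp hp
    obtain ⟨hq1, hq2⟩ := mem_product.mp hq
    have h1 : p.1 + q.1 = q.2 + p.2 := (char2_swap _ _ _ _).mp he
    have hmem : p.1 + q.1 ∈ A ∩ B := by
      refine mem_inter.mpr ⟨hAc _ hp1 _ hq1, ?_⟩
      rw [h1]; exact hBc _ hq2 _ hp2
    rw [hAB, mem_singleton] at hmem
    have e1 : p.1 = q.1 := (char2_eq_iff _ _).mp hmem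
    have e2 : p.2 = q.2 := by
      rw [e1] at he
      exact add_left_cancel he
    exact Prod.ext e1 e2
  have himg : (A ×ˢ B).image (fun p => p.1 + p.2) = univ := by
    apply eq_of_subset_of_card_le (subset_univ _)
    rw [card_image_of_injOn (fun p hp q hq => hinj p hp q hq)]
    rw [card_product, hA, hB]
    simp
  have hc : c ∈ (A ×ˢ B).image (fun p => p.1 + p.2) := himg ▸ mem_univ c
  obtain ⟨p, hp, hpc⟩ := mem_image.mp hc
  rw [card_eq_one]
  refine ⟨p, ?_⟩
  ext q
  simp only [mem_filter, mem_singleton]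
  constructor
  · rintro ⟨hq, hqc⟩
    exact hinj q hq p hp (by rw [hqc, hpc])
  · rintro rfl
    exact ⟨hp, hpc⟩

/-- Each nonzero element of `H` lies in some member of the spread. -/
lemma spread_cover (Hs : Fin 5 → Finset H4)
    (hzero : ∀ i, 0 ∈ Hs i) (hcard : ∀ i, (Hs i).card = 4)
    (hspread : ∀ i j, i ≠ j → Hs i ∩ Hs j = {0}) :
    ∀ c : H4, c ≠ 0 → ∃ i, c ∈ Hs i := by
  intro c hc
  by_contra hno
  push_neg at hno
  have hdisj : ∀ i ∈ (univ : Finset (Fin 5)), ∀ j ∈ (univ : Finset (Fin 5)), i ≠ j →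
      Disjoint ((Hs i).erase 0) ((Hs j).erase 0) := by
    intro i _ j _ hij
    rw [disjoint_left]
    intro y hyi hyj
    have : y ∈ Hs i ∩ Hs j := mem_inter.mpr ⟨mem_of_mem_erase hyi, mem_of_mem_erase hyj⟩
    rw [hspread i j hij, mem_singleton] at this
    exact (mem_erase.mp hyi).1 this
  have hcard15 : (univ.biUnion fun i => (Hs i).erase 0).card = 15 := by
    rw [card_biUnion hdisj]
    have : ∀ i, ((Hs i).erase 0).card = 3 := by
      intro i; rw [card_erase_of_mem (hzero i), hcard i]
    simp [this]
  have hsub : (univ.biUnion fun i => (Hs i).erase 0) ⊆ ((univ : Finset H4).erase 0).erase c := by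
    intro y hy
    obtain ⟨i, _, hyi⟩ := mem_biUnion.mp hy
    refine mem_erase.mpr ⟨?_, mem_erase.mpr ⟨(mem_erase.mp hyi).1, mem_univ y⟩⟩
    rintro rfl
    exact hno i (mem_of_mem_erase hyi)
  have hle := card_le_card hsub
  rw [hcard15] at hle
  have h16 : (univ : Finset H4).card = 16 := by simp
  have hc2 : c ∈ (univ : Finset H4).erase 0 := mem_erase.mpr ⟨hc, mem_univ c⟩
  rw [card_erase_of_mem hc2, card_erase_of_mem (mem_univ (0 : H4)), h16] at hle
  omega

/-- Number of ordered pairs from 5 distinct elements of `ZMod 6` with given nonzero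
difference is 4. -/
lemma coset_count (v : Fin 5 → ZMod 6) (hv : Function.Injective v) (t : ZMod 6) (ht : t ≠ 0) :
    ((univ : Finset (Fin 5 × Fin 5)).filter fun p => v p.1 - v p.2 = t).card = 4 := by
  have hcard5 : (univ.image v).card = 5 := by
    rw [card_image_of_injective _ hv]; simp
  have hone : ((univ : Finset (ZMod 6)) \ univ.image v).card = 1 := by
    rw [card_sdiff_of_subset (subset_univ _), hcard5]
    simp
  obtain ⟨m, hm⟩ := card_eq_one.mp hone
  have hm' : m ∉ univ.image v := by
    have : m ∈ (univ : Finset (ZMod 6)) \ univ.image v := hm ▸ mem_singleton_self m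
    exact (mem_sdiff.mp this).2
  have himg : univ.image v = (univ : Finset (ZMod 6)).erase m := by
    apply eq_of_subset_of_card_le
    · intro y hy
      exact mem_erase.mpr ⟨fun h => hm' (h ▸ hy), mem_univ y⟩
    · rw [card_erase_of_mem (mem_univ m), hcard5]
      simp
  have key : ∀ m t : ZMod 6, t ≠ 0 →
      ((((univ : Finset (ZMod 6)).erase m) ×ˢ ((univ : Finset (ZMod 6)).erase m)).filter
        fun p => p.1 - p.2 = t).card = 4 := by decide
  rw [← key m t ht]
  apply card_bij (fun p _ => (v p.1, v p.2))
  · intro p hp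
    have hP := (mem_filter.mp hp).2
    refine mem_filter.mpr ⟨mem_product.mpr ⟨?_, ?_⟩, hP⟩
    · rw [← himg]; exact mem_image_of_mem v (mem_univ _)
    · rw [← himg]; exact mem_image_of_mem v (mem_univ _)
  · intro p _ q _ he
    have h1 := congrArg Prod.fst he
    have h2 := congrArg Prod.snd he
    exact Prod.ext (hv h1) (hv h2)
  · intro q hq
    obtain ⟨hq1, hq2⟩ := mem_product.mp (mem_filter.mp hq).1
    rw [← himg] at hq1 hq2
    obtain ⟨i, _, hi⟩ := mem_image.mp hq1
    obtain ⟨j, _, hj⟩ := mem_image.mp hq2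
    refine ⟨(i, j), mem_filter.mpr ⟨mem_univ _, ?_⟩, ?_⟩
    · simp only
      rw [hi, hj]
      exact (mem_filter.mp hq).2
    · rw [hi, hj]

end aux

/-- McFarland's construction with q = 4, d = 1: spreading the five subgroups of a spread of
`H = (ℤ/2)⁴` over five distinct cosets of `H` in `G = H ⊕ ℤ/6` gives a `(96,20,4)`
difference set. -/
theorem mcfarland_96_20_4
    (Hs : Fin 5 → Finset (Fin 4 → ZMod 2))
    -- each Hᵢ is a subgroup of order 4
    (hzero : ∀ i, 0 ∈ Hs i)
    (hclosed : ∀ i, ∀ a ∈ Hs i, ∀ b ∈ Hs i, a + b ∈ Hs i)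
    (hcard : ∀ i, (Hs i).card = 4)
    -- the subgroups pairwise intersect trivially (a spread)
    (hspread : ∀ i j, i ≠ j → Hs i ∩ Hs j = {0})
    -- representatives of five distinct cosets of H in G = H ⊕ ℤ/6
    (g : Fin 5 → (Fin 4 → ZMod 2) × ZMod 6)
    (hcosets : ∀ i j, i ≠ j → (g i).2 ≠ (g j).2) :
    Fintype.card ((Fin 4 → ZMod 2) × ZMod 6) = 96 ∧
    (Finset.univ.biUnion fun i => (Hs i).image fun h => g i + (h, 0)).card = 20 ∧
    ∀ x : (Fin 4 → ZMod 2) × ZMod 6, x ≠ 0 →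
      ((((Finset.univ.biUnion fun i => (Hs i).image fun h => g i + (h, 0)) ×ˢ
          (Finset.univ.biUnion fun i => (Hs i).image fun h => g i + (h, 0))).filter
        fun p => p.1 - p.2 = x).card) = 4 := by
  set D : Fin 5 → Finset ((Fin 4 → ZMod 2) × ZMod 6) :=
    fun i => (Hs i).image fun h => g i + (h, 0) with hD
  -- the translation maps are injective
  have hinj : ∀ i : Fin 5, Function.Injective (fun h : Fin 4 → ZMod 2 => g i + (h, (0 : ZMod 6))) := by
    intro i a b hab
    have := congrArg Prod.fst hab
    simpa using this
  -- second coordinate of elements of D i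
  have hsnd : ∀ i, ∀ y ∈ D i, y.2 = (g i).2 := by
    intro i y hy
    obtain ⟨h, _, rfl⟩ := mem_image.mp hy
    simp
  have hDdisj : ∀ i ∈ (univ : Finset (Fin 5)), ∀ j ∈ (univ : Finset (Fin 5)), i ≠ j →
      Disjoint (D i) (D j) := by
    intro i _ j _ hij
    rw [disjoint_left]
    intro y hyi hyj
    exact hcosets i j hij ((hsnd i y hyi) ▸ (hsnd j y hyj))
  have hDcard : ∀ i, (D i).card = 4 := by
    intro i
    rw [hD]
    rw [card_image_of_injective _ (hinj i), hcard i]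
  refine ⟨by simp, ?_, ?_⟩
  · rw [card_biUnion hDdisj]
    simp [hDcard]
  · intro x hx
    -- split the filtered product over pairs (i,j)
    have hsplit : ((univ.biUnion D) ×ˢ (univ.biUnion D)).filter (fun p => p.1 - p.2 = x)
        = (univ : Finset (Fin 5 × Fin 5)).biUnion
            (fun q => (D q.1 ×ˢ D q.2).filter (fun p => p.1 - p.2 = x)) := by
      ext p
      simp only [mem_filter, mem_product, mem_biUnion, mem_univ, true_and]
      constructor
      · rintro ⟨⟨⟨i, hi⟩, ⟨j, hj⟩⟩, hP⟩
        exact ⟨(i, j), ⟨⟨hi, hj⟩, hP⟩⟩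
      · rintro ⟨⟨i, j⟩, ⟨⟨hi, hj⟩, hP⟩⟩
        exact ⟨⟨⟨i, hi⟩, ⟨j, hj⟩⟩, hP⟩
    rw [hsplit]
    have hpairdisj : ∀ q ∈ (univ : Finset (Fin 5 × Fin 5)), ∀ r ∈ (univ : Finset (Fin 5 × Fin 5)),
        q ≠ r → Disjoint ((D q.1 ×ˢ D q.2).filter (fun p => p.1 - p.2 = x))
          ((D r.1 ×ˢ D r.2).filter (fun p => p.1 - p.2 = x)) := by
      intro q _ r _ hqr
      rw [disjoint_left]
      intro p hpq hpr
      obtain ⟨hq1, hq2⟩ := mem_product.mp (mem_filter.mp hpq).1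
      obtain ⟨hr1, hr2⟩ := mem_product.mp (mem_filter.mp hpr).1
      have e1 : q.1 = r.1 := by
        by_contra hne
        exact (disjoint_left.mp (hDdisj q.1 (mem_univ _) r.1 (mem_univ _) hne)) hq1 hr1
      have e2 : q.2 = r.2 := by
        by_contra hne
        exact (disjoint_left.mp (hDdisj q.2 (mem_univ _) r.2 (mem_univ _) hne)) hq2 hr2
      exact hqr (Prod.ext e1 e2)
    rw [card_biUnion hpairdisj]
    -- rewrite each term
    have hterm : ∀ q : Fin 5 × Fin 5,
        ((D q.1 ×ˢ D q.2).filter (fun p => p.1 - p.2 = x)).card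
        = if (g q.1).2 - (g q.2).2 = x.2 then
            ((Hs q.1 ×ˢ Hs q.2).filter
              (fun p => p.1 + p.2 = x.1 + (g q.1).1 + (g q.2).1)).card
          else 0 := by
      rintro ⟨i, j⟩
      -- D i ×ˢ D j as an image
      have hprodimg : D i ×ˢ D j = (Hs i ×ˢ Hs j).image
          (fun hk => (g i + (hk.1, 0), g j + (hk.2, 0))) := by
        ext p
        simp only [hD, mem_product, mem_image, Prod.ext_iff]
        constructor
        · rintro ⟨⟨h, hh, hhe⟩, ⟨k, hk, hke⟩⟩
          exact ⟨(h, k), ⟨hh, hk⟩, hhe, hke⟩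
        · rintro ⟨⟨h, k⟩, ⟨hh, hk⟩, he1, he2⟩
          exact ⟨⟨h, hh, he1⟩, ⟨k, hk, he2⟩⟩
      have hinj2 : Function.Injective
          (fun hk : (Fin 4 → ZMod 2) × (Fin 4 → ZMod 2) => (g i + (hk.1, 0), g j + (hk.2, 0))) := by
        intro a b hab
        have h1 := congrArg Prod.fst hab
        have h2 := congrArg Prod.snd hab
        exact Prod.ext (hinj i h1) (hinj j h2)
      rw [hprodimg, filter_image, card_image_of_injective _ hinj2]
      -- now rewrite the inner condition
      have hcond : ∀ hk : (Fin 4 → ZMod 2) × (Fin 4 → ZMod 2),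
          ((g i + (hk.1, 0)) - (g j + (hk.2, 0)) = x)
          ↔ (hk.1 + hk.2 = x.1 + (g i).1 + (g j).1 ∧ (g i).2 - (g j).2 = x.2) := by
        intro hk
        rw [Prod.ext_iff]
        constructor
        · rintro ⟨h1, h2⟩
          constructor
          · have : ((g i).1 + hk.1) - ((g j).1 + hk.2) = x.1 := by simpa using h1
            exact (char2_sub_iff _ _ _ _ _).mp this
          · simpa using h2
        · rintro ⟨h1, h2⟩
          constructor
          · have := (char2_sub_iff ((g i).1) ((g j).1) hk.1 hk.2 x.1).mpr h1
            simpa using this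
          · simpa using h2
      split_ifs with h2
      · congr 1
        apply filter_congr
        intro hk _
        rw [hcond hk]
        simp [h2]
      · rw [card_eq_zero, filter_eq_empty_iff]
        intro hk _ hP
        exact h2 ((hcond hk).mp hP).2
    simp only [hterm]
    rw [Fintype.sum_prod_type]
    by_cases hx2 : x.2 = 0
    -- case x.2 = 0 : only diagonal terms
    · have hx1 : x.1 ≠ 0 := by
        intro h1
        exact hx (Prod.ext h1 hx2)
      have hdiag : ∀ i : Fin 5,
          (∑ j : Fin 5, if (g i).2 - (g j).2 = x.2 then
            ((Hs i ×ˢ Hs j).filter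
              (fun p => p.1 + p.2 = x.1 + (g i).1 + (g j).1)).card else 0)
          = if x.1 ∈ Hs i then 4 else 0 := by
        intro i
        rw [Finset.sum_eq_single i]
        · have hcnd : (g i).2 - (g i).2 = x.2 := by rw [sub_self, hx2]
          rw [if_pos hcnd]
          have hc : x.1 + (g i).1 + (g i).1 = x.1 := by
            rw [add_assoc, char2_add_self, add_zero]
          rw [hc, pair_count_diag (Hs i) (hclosed i) x.1, hcard i]
        · intro j _ hji
          rw [if_neg]
          intro hcnd
          rw [hx2, sub_eq_zero] at hcnd
          exact hcosets i j (Ne.symm hji) hcnd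
        · intro hni
          exact absurd (mem_univ i) hni
      simp only [hdiag]
      obtain ⟨i₀, hi₀⟩ := spread_cover Hs hzero hcard hspread x.1 hx1
      rw [Finset.sum_eq_single i₀]
      · rw [if_pos hi₀]
      · intro j _ hji
        rw [if_neg]
        intro hj
        have : x.1 ∈ Hs j ∩ Hs i₀ := mem_inter.mpr ⟨hj, hi₀⟩
        rw [hspread j i₀ hji, mem_singleton] at this
        exact hx1 this
      · intro hni
        exact absurd (mem_univ i₀) hni
    -- case x.2 ≠ 0 : only off-diagonal terms
    · have hterm2 : ∀ i j : Fin 5,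
          (if (g i).2 - (g j).2 = x.2 then
            ((Hs i ×ˢ Hs j).filter
              (fun p => p.1 + p.2 = x.1 + (g i).1 + (g j).1)).card else 0)
          = if (g i).2 - (g j).2 = x.2 then 1 else 0 := by
        intro i j
        split_ifs with hcnd
        · have hij : i ≠ j := by
            rintro rfl
            rw [sub_self] at hcnd
            exact hx2 hcnd.symm
          exact pair_count_off (Hs i) (Hs j) (hclosed i) (hclosed j) (hcard i) (hcard j)
            (hspread i j hij) _
        · rfl
      simp only [hterm2]
      have hvinj : Function.Injective (fun i => (g i).2) := by
        intro i j hij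
        by_contra hne
        exact hcosets i j hne hij
      have h4 := coset_count (fun i => (g i).2) hvinj x.2 hx2
      rw [Finset.card_filter, Fintype.sum_prod_type] at h4
      simpa using h4
end
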